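/- Let λ ∈ ℝ and let X_H ∈ osp(1|2), i.e. H ∈ span{1, x, x², xθ_1, θ_1}. For every F ∈ C^∞(ℝ^{1|2}) write F = F_1 + F_2θ_2 with ∂_2(F_1) = ∂_2(F_2) = 0. Then L^λ_{X_H}(F) = L^λ_{X_H}(F_1) + L^{λ+1/2}_{X_H}(F_2)·θ_2. (Hence F ↦ (F_1, F_2) defines an osp(1|2)-isomorphism F²_λ ≅ F¹_λ ⊕ Π(F¹_{λ+1/2}).) -/

import Mathlib

noncomputable section
open Function
open scoped ContDiff

def SmoothFn : Subalgebra ℝ (ℝ → ℝ) where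
  carrier := {f | ContDiff ℝ ∞ f}
  mul_mem' := fun {a b} (hf : ContDiff ℝ ∞ a) (hg : ContDiff ℝ ∞ b) => hf.mul hg
  add_mem' := fun {a b} (hf : ContDiff ℝ ∞ a) (hg : ContDiff ℝ ∞ b) => hf.add hg
  algebraMap_mem' := fun c => (contDiff_const : ContDiff ℝ ∞ (fun _ : ℝ => c))

abbrev SF : Type := SmoothFn

theorem mem_SmoothFn {f : ℝ → ℝ} : f ∈ SmoothFn ↔ ContDiff ℝ ∞ f := ⟨fun h => h, fun h => h⟩

def sderiv (f : SF) : SF :=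
  ⟨deriv (f : ℝ → ℝ), mem_SmoothFn.mpr (contDiff_infty_iff_deriv.mp (mem_SmoothFn.mp f.2)).2⟩

def cx : SF := ⟨id, mem_SmoothFn.mpr contDiff_id⟩

/-- `C^∞(ℝ^{1|2})`: a superfunction `f₀ + f₁θ₁ + f₂θ₂ + f₁₂θ₁θ₂` is recorded by its four
smooth coefficients, indexed by `0 ↦ f₀`, `1 ↦ f₁`, `2 ↦ f₂`, `3 ↦ f₁₂`. -/
def S2 : Type := Fin 4 → SF

instance : AddCommGroup S2 := inferInstanceAs (AddCommGroup (Fin 4 → SF))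
instance : Module ℝ S2 := inferInstanceAs (Module ℝ (Fin 4 → SF))

namespace S2

@[simp] theorem add_apply (F G : S2) (i : Fin 4) : (F + G) i = F i + G i := rfl
@[simp] theorem sub_apply (F G : S2) (i : Fin 4) : (F - G) i = F i - G i := rfl
@[simp] theorem smul_apply (c : ℝ) (F : S2) (i : Fin 4) : (c • F) i = c • F i := rfl
@[simp] theorem zero_apply (i : Fin 4) : (0 : S2) i = 0 := rfl

/-- Supercommutative multiplication on `C^∞(ℝ^{1|2})`. -/
def mul (F G : S2) : S2 :=
  ![F 0 * G 0,
    F 0 * G 1 + F 1 * G 0,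
    F 0 * G 2 + F 2 * G 0,
    F 0 * G 3 + F 3 * G 0 + F 1 * G 2 - F 2 * G 1]

/-- The odd coordinate `θ₁`. -/
def θ1 : S2 := ![0, 1, 0, 0]
/-- The odd coordinate `θ₂`. -/
def θ2 : S2 := ![0, 0, 1, 0]
/-- The constant superfunction `1`. -/
def one2 : S2 := ![1, 0, 0, 0]
/-- The superfunction `x`. -/
def fx : S2 := ![cx, 0, 0, 0]
/-- The superfunction `x²`. -/
def fx2 : S2 := ![cx * cx, 0, 0, 0]
/-- The superfunction `xθ₁`. -/
def fxθ1 : S2 := ![0, cx, 0, 0]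
/-- The superfunction `xθ₂`. -/
def fxθ2 : S2 := ![0, 0, cx, 0]
/-- The superfunction `θ₁θ₂`. -/
def fθ12 : S2 := ![0, 0, 0, 1]

/-- The even derivative `∂ₓ`. -/
def dx (F : S2) : S2 := fun i => sderiv (F i)
/-- The odd (left) partial derivative `∂₁ = ∂/∂θ₁`. -/
def d1 (F : S2) : S2 := ![F 1, 0, F 3, 0]
/-- The odd (left) partial derivative `∂₂ = ∂/∂θ₂`. -/
def d2 (F : S2) : S2 := ![F 2, -F 3, 0, 0]
/-- The odd vector field `η̄₁ = ∂₁ − θ₁∂ₓ`. -/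
def eta1 (F : S2) : S2 := d1 F - mul θ1 (dx F)
/-- The odd vector field `η̄₂ = ∂₂ − θ₂∂ₓ`. -/
def eta2 (F : S2) : S2 := d2 F - mul θ2 (dx F)

/-- The even part `f₀ + f₁₂θ₁θ₂` of a superfunction. -/
def evenPart (F : S2) : S2 := ![F 0, 0, 0, F 3]
/-- The odd part `f₁θ₁ + f₂θ₂` of a superfunction. -/
def oddPart (F : S2) : S2 := ![0, F 1, F 2, 0]

/-- `F` is even (parity `0̄`). -/
def IsEven (F : S2) : Prop := F 1 = 0 ∧ F 2 = 0
/-- `F` is odd (parity `1̄`). -/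
def IsOdd (F : S2) : Prop := F 0 = 0 ∧ F 3 = 0
/-- `F` is homogeneous of parity `p` (`false` = even, `true` = odd). -/
def HasParity (F : S2) (p : Bool) : Prop := if p then IsOdd F else IsEven F

/-- The sign `(−1)^p`. -/
def sgn (p : Bool) : ℝ := if p then -1 else 1

/-- The contact vector field `X_F` applied to `G`; for homogeneous `F` this is
`F∂ₓ(G) − ½(−1)^{|F|}(η̄₁(F)η̄₁(G) + η̄₂(F)η̄₂(G))`, extended linearly in `F`. -/
def X (F G : S2) : S2 :=
  mul F (dx G)
    - (1 / 2 : ℝ) • (mul (eta1 (evenPart F)) (eta1 G) + mul (eta2 (evenPart F)) (eta2 G))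
    + (1 / 2 : ℝ) • (mul (eta1 (oddPart F)) (eta1 G) + mul (eta2 (oddPart F)) (eta2 G))

/-- The contact bracket `{F,G} = FG' − F'G − ½(−1)^{|F|}(η̄₁(F)η̄₁(G) + η̄₂(F)η̄₂(G))`
(for homogeneous `F`, extended linearly), so `[X_F, X_G] = X_{{F,G}}`. -/
def cbr (F G : S2) : S2 := X F G - mul (dx F) G

/-- The action `L^λ_{X_H}(G) = X_H(G) + λ H' G` of `X_H` on `λ`-densities `F²_λ`. -/
def Lact (lam : ℝ) (H G : S2) : S2 := X H G + lam • mul (dx H) G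

/-- `osp(2|2)`, realized as the span of the contact Hamiltonians
`1, x, x², xθ₁, xθ₂, θ₁, θ₂, θ₁θ₂` (identifying `X_F ↔ F`). -/
def osp22 : Submodule ℝ S2 :=
  Submodule.span ℝ {one2, fx, fx2, fxθ1, fxθ2, θ1, θ2, fθ12}

/-- `osp(1|2) ⊂ osp(2|2)`: the span of `1, x, x², xθ₁, θ₁`. -/
def osp12 : Submodule ℝ S2 :=
  Submodule.span ℝ {one2, fx, fx2, fxθ1, θ1}

/-- A linear differential operator `F²_λ → F²_μ`:
`A(F) = Σ_{ℓ,m} a_{ℓ,m} η̄₁^ℓ η̄₂^m (F)` with smooth coefficients. -/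
def IsDiffOp (A : S2 → S2) : Prop :=
  ∃ (N : ℕ) (a : Fin (N + 1) → Fin (N + 1) → S2),
    ∀ F, A F = ∑ l : Fin (N + 1), ∑ m : Fin (N + 1),
      mul (a l m) (eta1^[(l : ℕ)] (eta2^[(m : ℕ)] F))

/-- The action of `X_H` (`H` homogeneous of parity `pH`) on a homogeneous operator `A`
of parity `pA`: `X_H·A = L^μ_{X_H} ∘ A − (−1)^{|H||A|} A ∘ L^λ_{X_H}`. -/
def opAct (lam mu : ℝ) (pH pA : Bool) (H : S2) (A : S2 → S2) : S2 → S2 :=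
  fun F => Lact mu H (A F) - sgn (pH && pA) • A (Lact lam H F)

/-- An operator is homogeneous of parity `p` if it shifts the parity of homogeneous
superfunctions by `p`. -/
def OpParity (A : S2 → S2) (p : Bool) : Prop :=
  ∀ (F : S2) (q : Bool), HasParity F q → HasParity (A F) (xor p q)


/-- A `1`-cochain of `osp(2|2)` with values in `D²_{λ,μ}`, recorded as a map defined on all
contact Hamiltonians; it represents a cochain through its restriction to `osp22`,
`Υ(X_G) = U G`. -/
abbrev Cochain := S2 → (S2 → S2)

/-- A cochain takes values in differential operators (on `osp(2|2)`). -/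
def DiffValued (U : Cochain) : Prop := ∀ F ∈ osp22, IsDiffOp (U F)

/-- The `1`-cocycle condition for a homogeneous cochain `U` of parity `pU`:
`Υ([X_F,X_G]) = (−1)^{|F||Υ|} X_F·Υ(X_G) − (−1)^{|G|(|F|+|Υ|)} X_G·Υ(X_F)`
for all homogeneous `X_F, X_G ∈ osp(2|2)`. -/
def IsCocycle (lam mu : ℝ) (pU : Bool) (U : Cochain) : Prop :=
  ∀ F G : S2, F ∈ osp22 → G ∈ osp22 →
    ∀ pF pG : Bool, HasParity F pF → HasParity G pG →
      U (cbr F G) =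
        sgn (pF && pU) • opAct lam mu pF (xor pU pG) F (U G)
          - sgn (pG && xor pF pU) • opAct lam mu pG (xor pU pF) G (U F)

/-- `U` is a coboundary of parity `pU`: there is `A ∈ D²_{λ,μ}` of parity `pU` with
`Υ(X_F) = (−1)^{|F||A|} X_F·A` for all `X_F ∈ osp(2|2)`. -/
def IsCoboundary (lam mu : ℝ) (pU : Bool) (U : Cochain) : Prop :=
  ∃ A : S2 → S2, IsDiffOp A ∧ OpParity A pU ∧
    ∀ F ∈ osp22, ∀ pF : Bool, HasParity F pF →
      U F = sgn (pF && pU) • opAct lam mu pF pU F A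

/-- `U` is a coboundary (of some homogeneous `A ∈ D²_{λ,μ}`). -/
def IsCoboundaryAny (lam mu : ℝ) (U : Cochain) : Prop :=
  ∃ pU : Bool, IsCoboundary lam mu pU U

/-- An `osp(1|2)`-relative `1`-cocycle: a `1`-cocycle vanishing on `osp(1|2)`. -/
def IsRelCocycle (lam mu : ℝ) (pU : Bool) (U : Cochain) : Prop :=
  IsCocycle lam mu pU U ∧ ∀ F ∈ osp12, U F = 0

/-- `A ∈ D²_{λ,μ}` (of parity `pA`) is `osp(1|2)`-invariant: `X_H·A = 0` for all
`X_H ∈ osp(1|2)`. -/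
def IsInvariantOp (lam mu : ℝ) (pA : Bool) (A : S2 → S2) : Prop :=
  ∀ H ∈ osp12, ∀ pH : Bool, HasParity H pH → opAct lam mu pH pA H A = 0

/-- `U` is an `osp(1|2)`-relative coboundary of parity `pU`: `Υ = δA` with `A` an
`osp(1|2)`-invariant homogeneous element of `D²_{λ,μ}`. -/
def IsRelCoboundary (lam mu : ℝ) (pU : Bool) (U : Cochain) : Prop :=
  ∃ A : S2 → S2, IsDiffOp A ∧ OpParity A pU ∧ IsInvariantOp lam mu pU A ∧
    ∀ F ∈ osp22, ∀ pF : Bool, HasParity F pF →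
      U F = sgn (pF && pU) • opAct lam mu pF pU F A

/-- `U` is a relative coboundary (of some homogeneous invariant `A`). -/
def IsRelCoboundaryAny (lam mu : ℝ) (U : Cochain) : Prop :=
  ∃ pU : Bool, IsRelCoboundary lam mu pU U

/-! ### The explicit nontrivial cocycles -/

/-- `Υ_{λ,λ}(X_G) : F ↦ G′·F`. -/
def U1 : Cochain := fun G F => mul (dx G) F

/-- `Υ̃_{0,0}(X_G) : F ↦ η̄₁η̄₂(G)·F`. -/
def Ut0 : Cochain := fun G F => mul (eta1 (eta2 G)) F

/-- `Υ̃_{λ,λ}(X_G) : F ↦ 2λ η̄₁(∂₂G)·F − (−1)^{|G|}(∂₂(G)·η̄₁(F) + θ₂·η̄₂η̄₁(G)·η̄₂(F))`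
(for `λ ≠ 0`), the sign `(−1)^{|G|}` being realized by the even/odd splitting of `G`. -/
def Ut (lam : ℝ) : Cochain := fun G F =>
  (2 * lam) • mul (eta1 (d2 G)) F
    - (mul (d2 (evenPart G)) (eta1 F) + mul (mul θ2 (eta2 (eta1 (evenPart G)))) (eta2 F))
    + (mul (d2 (oddPart G)) (eta1 F) + mul (mul θ2 (eta2 (eta1 (oddPart G)))) (eta2 F))

/-- `Υ̃_{λ,λ}` for general `λ` (with the special value at `λ = 0`). -/
def Ut' (lam : ℝ) : Cochain := if lam = 0 then Ut0 else Ut lam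

/-- `Υ_{−k/2,k/2}(X_G) : F ↦ G′·η̄₁η̄₂^{2k−1}(F)`. -/
def Uk (k : ℕ) : Cochain := fun G F => mul (dx G) (eta1 (eta2^[2 * k - 1] F))

/-- `Υ̃_{−k/2,k/2}(X_G) :
F ↦ k η̄₁(∂₂G)·η̄₁η̄₂^{2k−1}(F) − (−1)^{|G|}(∂₂(G)·η̄₂^{2k+1}(F) − η̄₁(θ₂∂₂(G))·η̄₁^{2k+1}(F))`. -/
def Utk (k : ℕ) : Cochain := fun G F =>
  (k : ℝ) • mul (eta1 (d2 G)) (eta1 (eta2^[2 * k - 1] F))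
    - (mul (d2 (evenPart G)) (eta2^[2 * k + 1] F)
        - mul (eta1 (mul θ2 (d2 (evenPart G)))) (eta1^[2 * k + 1] F))
    + (mul (d2 (oddPart G)) (eta2^[2 * k + 1] F)
        - mul (eta1 (mul θ2 (d2 (oddPart G)))) (eta1^[2 * k + 1] F))

/-- `Ῡ_{−k/2,k/2}(X_G) :
F ↦ (k−1) G″·η̄₁η̄₂^{2k−3}(F) + (−1)^{|G|}(η̄₂(G′)·η̄₁^{2k−1}(F) − η̄₁(G′)·η̄₂^{2k−1}(F))`. -/
def Ub (k : ℕ) : Cochain := fun G F =>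
  ((k : ℝ) - 1) • mul (dx (dx G)) (eta1 (eta2^[2 * k - 3] F))
    + (mul (eta2 (dx (evenPart G))) (eta1^[2 * k - 1] F)
        - mul (eta1 (dx (evenPart G))) (eta2^[2 * k - 1] F))
    - (mul (eta2 (dx (oddPart G))) (eta1^[2 * k - 1] F)
        - mul (eta1 (dx (oddPart G))) (eta2^[2 * k - 1] F))

/-! ### The action on possibly inhomogeneous operators -/

/-- The even part of an operator. -/
def opEven (A : S2 → S2) : S2 → S2 :=
  fun F => evenPart (A (evenPart F)) + oddPart (A (oddPart F))

/-- The odd part of an operator. -/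
def opOdd (A : S2 → S2) : S2 → S2 :=
  fun F => oddPart (A (evenPart F)) + evenPart (A (oddPart F))

/-- The action `X_H·A` of a homogeneous `X_H` on a possibly inhomogeneous operator `A`,
extending `opAct` by linearity in `A` via its parity decomposition. -/
def opActG (lam mu : ℝ) (pH : Bool) (H : S2) (A : S2 → S2) : S2 → S2 :=
  fun F => Lact mu H (A F)
    - (opEven A (Lact lam H F) + sgn pH • opOdd A (Lact lam H F))

/-- The coboundary `δA` of a homogeneous operator `A` of parity `pA`, as a cochain:
`δA(X_F) = (−1)^{|F||A|} X_F·A`, extended linearly in `F`. -/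
def cobdMap (lam mu : ℝ) (pA : Bool) (A : S2 → S2) : Cochain := fun F =>
  opAct lam mu false pA (evenPart F) A
    + sgn pA • opAct lam mu true pA (oddPart F) A

/-- A differential operator with constant coefficients. -/
def IsConstCoeffOp (A : S2 → S2) : Prop :=
  ∃ (N : ℕ) (a : Fin (N + 1) → Fin (N + 1) → Fin 4 → ℝ),
    ∀ F, A F = ∑ l : Fin (N + 1), ∑ m : Fin (N + 1),
      mul (fun i => algebraMap ℝ SF (a l m i)) (eta1^[(l : ℕ)] (eta2^[(m : ℕ)] F))

end S2

namespace S2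

/-- The first component `F₁` in the decomposition `F = F₁ + F₂θ₂`, `∂₂F₁ = ∂₂F₂ = 0`. -/
def pi1 (F : S2) : S2 := ![F 0, F 1, 0, 0]

/-- The second component `F₂` in the decomposition `F = F₁ + F₂θ₂`, `∂₂F₁ = ∂₂F₂ = 0`. -/
def pi2 (F : S2) : S2 := ![F 2, F 3, 0, 0]

end S2

/-! Since `L^λ_{X_H}` is additive, only `L^λ_{X_H}(F₂θ₂)` needs computing. An `H ∈ osp(1|2)`
does not involve `θ₂`, so `η̄₂(H) = -θ₂H'`, and the term `η̄₂(H)η̄₂(θ₂)` of `X_H` hitting the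
factor `θ₂` contributes `½H'F₂θ₂`: the weight of `F₂` shifts from `λ` to `λ + ½`. -/

namespace S2

-- Unfolding these operations before a coordinate is applied leaves `![…]` under the arithmetic
-- of `S2`, where `add_apply` and its siblings no longer fire; hence the coordinatewise forms.
theorem mul_apply (F G : S2) (i : Fin 4) : mul F G i =
    ![F 0 * G 0, F 0 * G 1 + F 1 * G 0, F 0 * G 2 + F 2 * G 0,
      F 0 * G 3 + F 3 * G 0 + F 1 * G 2 - F 2 * G 1] i := rfl
theorem dx_apply (F : S2) (i : Fin 4) : dx F i = sderiv (F i) := rfl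
theorem d1_apply (F : S2) (i : Fin 4) : d1 F i = ![F 1, 0, F 3, 0] i := rfl
theorem d2_apply (F : S2) (i : Fin 4) : d2 F i = ![F 2, -F 3, 0, 0] i := rfl
theorem evenPart_apply (F : S2) (i : Fin 4) : evenPart F i = ![F 0, 0, 0, F 3] i := rfl
theorem oddPart_apply (F : S2) (i : Fin 4) : oddPart F i = ![0, F 1, F 2, 0] i := rfl
theorem θ1_apply (i : Fin 4) : θ1 i = ![0, 1, 0, 0] i := rfl
theorem θ2_apply (i : Fin 4) : θ2 i = ![0, 0, 1, 0] i := rfl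

theorem sderiv_zero : sderiv 0 = 0 :=
  Subtype.ext (funext fun x => deriv_const x 0)

theorem sderiv_add (f g : SF) : sderiv (f + g) = sderiv f + sderiv g := by
  apply Subtype.ext
  funext x
  have hd : ∀ h : SF, DifferentiableAt ℝ (h : ℝ → ℝ) x := fun h =>
    ((mem_SmoothFn.mp h.2).differentiable (by simp)).differentiableAt
  exact deriv_add (hd f) (hd g)

theorem d2_eq_zero_iff {F : S2} : d2 F = 0 ↔ F 2 = 0 ∧ F 3 = 0 := by
  constructor
  · intro h
    exact ⟨by simpa [d2] using congrFun h 0, by simpa [d2] using congrFun h 1⟩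
  · rintro ⟨h2, h3⟩
    funext i
    fin_cases i <;> simp [d2, h2, h3]

theorem d2_eq_zero_of_mem_osp12 {H : S2} (hH : H ∈ osp12) : d2 H = 0 := by
  rw [d2_eq_zero_iff]
  induction hH using Submodule.span_induction with
  | mem x hx =>
    simp only [Set.mem_insert_iff, Set.mem_singleton_iff] at hx
    rcases hx with rfl | rfl | rfl | rfl | rfl <;> exact ⟨rfl, rfl⟩
  | zero => exact ⟨rfl, rfl⟩
  | add x y _ _ hx hy => simp [hx.1, hx.2, hy.1, hy.2]
  | smul c x _ hx => simp [hx.1, hx.2]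

theorem pi1_add_mul_pi2_θ2 (F : S2) : pi1 F + mul (pi2 F) θ2 = F := by
  funext i
  rw [add_apply, mul_apply]
  fin_cases i <;> simp [pi1, pi2, θ2_apply]

theorem d2_pi1 (F : S2) : d2 (pi1 F) = 0 := d2_eq_zero_iff.2 ⟨rfl, rfl⟩

theorem d2_pi2 (F : S2) : d2 (pi2 F) = 0 := d2_eq_zero_iff.2 ⟨rfl, rfl⟩

theorem Lact_add_right (lam : ℝ) (H F G : S2) :
    Lact lam H (F + G) = Lact lam H F + Lact lam H G := by
  funext i
  fin_cases i <;>
    simp only [Lact, X, eta1, eta2, add_apply, sub_apply, smul_apply, mul_apply, dx_apply,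
      d1_apply, d2_apply, evenPart_apply, oddPart_apply, θ1_apply, θ2_apply, Matrix.cons_val,
      sderiv_add, Algebra.smul_def, Fin.isValue, Fin.zero_eta, Fin.mk_one, Fin.reduceFinMk] <;>
    ring

theorem Lact_mul_θ2 (lam : ℝ) {H G : S2} (hH : d2 H = 0) (hG : d2 G = 0) :
    Lact lam H (mul G θ2) = mul (Lact (lam + 1 / 2) H G) θ2 := by
  obtain ⟨hH2, hH3⟩ := d2_eq_zero_iff.1 hH
  obtain ⟨hG2, hG3⟩ := d2_eq_zero_iff.1 hG
  funext i
  fin_cases i <;>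
    simp only [Lact, X, eta1, eta2, add_apply, sub_apply, smul_apply, mul_apply, dx_apply,
      d1_apply, d2_apply, evenPart_apply, oddPart_apply, θ1_apply, θ2_apply, Matrix.cons_val,
      hH2, hH3, hG2, hG3, mul_zero, mul_one, add_zero, zero_add, sub_zero, sderiv_zero,
      Algebra.smul_def, map_add, Fin.isValue, Fin.zero_eta, Fin.mk_one, Fin.reduceFinMk] <;>
    ring

end S2

open S2 in
/-- For `λ ∈ ℝ` and `X_H ∈ osp(1|2)`: writing `F = F₁ + F₂θ₂` with `∂₂F₁ = ∂₂F₂ = 0`,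
one has `L^λ_{X_H}(F) = L^λ_{X_H}(F₁) + L^{λ+1/2}_{X_H}(F₂)·θ₂`.
(Hence `F ↦ (F₁, F₂)` is an `osp(1|2)`-isomorphism `F²_λ ≅ F¹_λ ⊕ Π(F¹_{λ+1/2})`.) -/
theorem density_decomposition (lam : ℝ) (F : S2) :
    F = pi1 F + mul (pi2 F) θ2 ∧ d2 (pi1 F) = 0 ∧ d2 (pi2 F) = 0 ∧
      ∀ H ∈ osp12,
        Lact lam H F = Lact lam H (pi1 F) + mul (Lact (lam + 1 / 2) H (pi2 F)) θ2 := by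
  refine ⟨(pi1_add_mul_pi2_θ2 F).symm, d2_pi1 F, d2_pi2 F, fun H hH => ?_⟩
  conv_lhs => rw [← pi1_add_mul_pi2_θ2 F]
  rw [Lact_add_right, Lact_mul_θ2 lam (d2_eq_zero_of_mem_osp12 hH) (d2_pi2 F)]
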